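/- arXiv:2409.14902 — 3 statements merged into one kernel-verified Lean document; each statement's English description precedes it below -/
import Mathlib

section
/- Transitivity of heterogeneous simulation sandwiches: if S_a ≼_{S,F_a⁻¹} S_b ≼_{AS,F_a⁻¹} S_a and S_b ≼_{S,F_b⁻¹} S_c ≼_{AS,F_b⁻¹} S_b, then S_a ≼_{S,F_{ab}⁻¹} S_c ≼_{AS,F_{ab}⁻¹} S_a, where F_{ab}⁻¹ is the componentwise composition F_a⁻¹ ∘ F_b⁻¹ of the inverse transducers. -/
/-- A generalized labeled transition system (Mealy type): transitions are tuples
`(x, u, y, x')` recording the source state, input, transition output, and successor. -/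
structure GLTS (X U Y : Type*) where
  init : Set X
  tr : Set (X × U × Y × X)

/-- Input `u` is available at state `x`. -/
def GLTS.enabled {X U Y : Type*} (S : GLTS X U Y) (x : X) (u : U) : Prop :=
  ∃ y x', (x, u, y, x') ∈ S.tr

/-- Simulation relation between GLTS with (possibly) heterogeneous alphabets, the
inputs being matched via `ru` and the outputs via `ry`. -/
def IsSimR {Xa Ua Ya Xb Ub Yb : Type*} (Sa : GLTS Xa Ua Ya) (Sb : GLTS Xb Ub Yb)
    (ru : Ua → Ub → Prop) (ry : Ya → Yb → Prop) (R : Set (Xa × Xb)) : Prop :=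
  (∀ xa ∈ Sa.init, ∃ xb ∈ Sb.init, (xa, xb) ∈ R) ∧
  ∀ xa xb, (xa, xb) ∈ R → ∀ u y xa', (xa, u, y, xa') ∈ Sa.tr →
    ∃ ub yb xb', ru u ub ∧ (xb, ub, yb, xb') ∈ Sb.tr ∧ (xa', xb') ∈ R ∧ ry y yb

/-- Alternating simulation relation between GLTS with (possibly) heterogeneous
alphabets: every input available at `x_a` is matched by an input available at `x_b`
all of whose successors are matched by successors of `x_a`. -/
def IsAltSimR {Xa Ua Ya Xb Ub Yb : Type*} (Sa : GLTS Xa Ua Ya) (Sb : GLTS Xb Ub Yb)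
    (ru : Ua → Ub → Prop) (ry : Ya → Yb → Prop) (R : Set (Xa × Xb)) : Prop :=
  (∀ xa ∈ Sa.init, ∃ xb ∈ Sb.init, (xa, xb) ∈ R) ∧
  ∀ xa xb, (xa, xb) ∈ R → ∀ ua, Sa.enabled xa ua →
    ∃ ub, ru ua ub ∧ Sb.enabled xb ub ∧
      ∀ yb xb', (xb, ub, yb, xb') ∈ Sb.tr →
        ∃ ya xa', (xa, ua, ya, xa') ∈ Sa.tr ∧ (xa', xb') ∈ R ∧ ry ya yb

/-- `S_a ≼_S S_b` : standard simulation (same input/output alphabets). -/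
def Sim {Xa Xb U Y : Type*} (Sa : GLTS Xa U Y) (Sb : GLTS Xb U Y) : Prop :=
  ∃ R, IsSimR Sa Sb Eq Eq R

/-- `S_a ≼_AS S_b` : standard alternating simulation (same alphabets). -/
def AltSim {Xa Xb U Y : Type*} (Sa : GLTS Xa U Y) (Sb : GLTS Xb U Y) : Prop :=
  ∃ R, IsAltSimR Sa Sb Eq Eq R

/-- `F⁻¹` is a proper inverse of `F`. -/
def ProperInv {A B : Type*} (f : A → B) (finv : B → Set A) : Prop :=
  (∀ a, a ∈ finv (f a)) ∧ ∀ b, b ∈ f '' finv b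

/-- The `F`-transduced system `F(S, F⁻¹)` : same states, transitions via preimages of
the input under `F_u⁻¹`, outputs composed with `F_y`. -/
def Ftransduce {X Ua Ya Ub Yb : Type*} (S : GLTS X Ua Ya)
    (Fui : Ub → Set Ua) (Fy : Ya → Yb) : GLTS X Ub Yb where
  init := S.init
  tr := {q | ∃ u ∈ Fui q.2.1, ∃ y, q.2.2.1 = Fy y ∧ (q.1, u, y, q.2.2.2) ∈ S.tr}

/-- The `F⁻¹`-transduced system `F⁻¹(S)` : same states, set-valued inputs and outputs,
transitions requiring the underlying transition for all images of the input set
under `F_u`, outputs composed with `F_y⁻¹`. -/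
def invTransduce {Xb Ua Ya Ub Yb : Type*} (S : GLTS Xb Ub Yb)
    (Fu : Ua → Ub) (Fyi : Yb → Set Ya) : GLTS Xb (Set Ua) (Set Ya) where
  init := S.init
  tr := {q | ∃ yb, q.2.2.1 = Fyi yb ∧ ∀ u ∈ q.2.1, (q.1, Fu u, yb, q.2.2.2) ∈ S.tr}

/-- `S_a ≼_{S,F⁻¹} S_b` : existence of an `F⁻¹`-simulation relation from `S_a` to
`S_b`, matching inputs via `u_b = F_u(u_a)` and outputs via `H_a ∈ F_y⁻¹(H_b)`. -/
def FiSim {Xa Ua Ya Xb Ub Yb : Type*} (Sa : GLTS Xa Ua Ya) (Sb : GLTS Xb Ub Yb)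
    (Fu : Ua → Ub) (Fyi : Yb → Set Ya) : Prop :=
  ∃ R, IsSimR Sa Sb (fun ua ub => ub = Fu ua) (fun ya yb => ya ∈ Fyi yb) R

/-- `S_b ≼_{AS,F⁻¹} S_a` : existence of an alternating `F⁻¹`-simulation relation from
the abstract system `S_b` to the concrete system `S_a` (with `F_u : U_a → U_b`,
`F_y⁻¹ : Y_b → 2^{Y_a}`). -/
def FiAltSim {Xa Ua Ya Xb Ub Yb : Type*} (Sb : GLTS Xb Ub Yb) (Sa : GLTS Xa Ua Ya)
    (Fu : Ua → Ub) (Fyi : Yb → Set Ya) : Prop :=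
  ∃ R, IsAltSimR Sb Sa (fun ub ua => ub = Fu ua) (fun yb ya => ya ∈ Fyi yb) R

/-- Transitivity of heterogeneous simulation sandwiches:
if `S_a ≼_{S,F_a⁻¹} S_b ≼_{AS,F_a⁻¹} S_a` and `S_b ≼_{S,F_b⁻¹} S_c ≼_{AS,F_b⁻¹} S_b`,
then `S_a ≼_{S,F_ab⁻¹} S_c ≼_{AS,F_ab⁻¹} S_a`, where the composite transducer has
forward input map `F_{u_b} ∘ F_{u_a}` and inverse output map
`y_c ↦ ⋃_{y_b ∈ F_{y_b}⁻¹(y_c)} F_{y_a}⁻¹(y_b)`. -/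
theorem fiSim_sandwich_trans {Xa Ua Ya Xb Ub Yb Xc Uc Yc : Type*}
    (Sa : GLTS Xa Ua Ya) (Sb : GLTS Xb Ub Yb) (Sc : GLTS Xc Uc Yc)
    (Fua : Ua → Ub) (Fya : Ya → Yb) (Fuai : Ub → Set Ua) (Fyai : Yb → Set Ya)
    (Fub : Ub → Uc) (Fyb : Yb → Yc) (Fubi : Uc → Set Ub) (Fybi : Yc → Set Yb)
    (hua : ProperInv Fua Fuai) (hya : ProperInv Fya Fyai)
    (hub : ProperInv Fub Fubi) (hyb : ProperInv Fyb Fybi)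
    (hab₁ : FiSim Sa Sb Fua Fyai) (hab₂ : FiAltSim Sb Sa Fua Fyai)
    (hbc₁ : FiSim Sb Sc Fub Fybi) (hbc₂ : FiAltSim Sc Sb Fub Fybi) :
    FiSim Sa Sc (Fub ∘ Fua) (fun yc => ⋃ yb ∈ Fybi yc, Fyai yb) ∧
    FiAltSim Sc Sa (Fub ∘ Fua) (fun yc => ⋃ yb ∈ Fybi yc, Fyai yb) := by
  obtain ⟨R1, hR1i, hR1t⟩ := hab₁
  obtain ⟨R2, hR2i, hR2t⟩ := hbc₁
  obtain ⟨Q1, hQ1i, hQ1t⟩ := hab₂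
  obtain ⟨Q2, hQ2i, hQ2t⟩ := hbc₂
  constructor
  · refine ⟨{p | ∃ xb, (p.1, xb) ∈ R1 ∧ (xb, p.2) ∈ R2}, ?_, ?_⟩
    · intro xa ha
      obtain ⟨xb, hb, hr1⟩ := hR1i xa ha
      obtain ⟨xc, hc, hr2⟩ := hR2i xb hb
      exact ⟨xc, hc, xb, hr1, hr2⟩
    · rintro xa xc ⟨xb, hr1, hr2⟩ u y xa' htr
      obtain ⟨ub, yb, xb', rfl, htrb, hr1', hy⟩ := hR1t xa xb hr1 u y xa' htr
      obtain ⟨uc, yc, xc', rfl, htrc, hr2', hyb⟩ := hR2t xb xc hr2 _ yb xb' htrb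
      exact ⟨_, yc, xc', rfl, htrc, ⟨xb', hr1', hr2'⟩,
        Set.mem_biUnion hyb hy⟩
  · refine ⟨{p | ∃ xb, (p.1, xb) ∈ Q2 ∧ (xb, p.2) ∈ Q1}, ?_, ?_⟩
    · intro xc hc
      obtain ⟨xb, hb, hq2⟩ := hQ2i xc hc
      obtain ⟨xa, ha, hq1⟩ := hQ1i xb hb
      exact ⟨xa, ha, xb, hq2, hq1⟩
    · rintro xc xa ⟨xb, hq2, hq1⟩ uc hen
      obtain ⟨ub, rfl, henb, hmatch2⟩ := hQ2t xc xb hq2 uc hen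
      obtain ⟨ua, rfl, hena, hmatch1⟩ := hQ1t xb xa hq1 ub henb
      refine ⟨ua, rfl, hena, ?_⟩
      intro ya xa' htra
      obtain ⟨yb, xb', htrb, hq1', hy⟩ := hmatch1 ya xa' htra
      obtain ⟨yc, xc', htrc, hq2', hyb⟩ := hmatch2 yb xb' htrb
      exact ⟨yc, xc', htrc, ⟨xb', hq2', hq1'⟩, Set.mem_biUnion hyb hy⟩
end

section
/- Closed feedback composition preserves simulation in the plant: if R_ab is a simulation relation from GLTS S_a to S_b (same input/output alphabets) and Π is a deterministic controller system composable with both via the same interconnection maps, then S_a ∥_F Π ≼_S S_b ∥_F Π, witnessed by the relation relating composed states whose plant components are R_ab-related and whose controller and stored-output components are equal. -/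
/-- Open sequential feedback composition `S₁ ∥_F S₂`: states are triples
`(x₁, x₂, y₁)` storing the plant state, the controller state, and the last plant
output; the controller receives `F_{i2}(y₁, u_c)`, the plant receives
`F_{i1}(y₁, y₂)` where `y₂` is the controller's transition output, the new stored
output is the plant's transition output, and the composed output is `F_o`. -/
def GLTS.compose {X1 U1 Y1 X2 U2 Y2 Uc Yc : Type*}
    (S1 : GLTS X1 U1 Y1) (S2 : GLTS X2 U2 Y2)
    (Fi1 : Y1 → Y2 → U1) (Fi2 : Y1 → Uc → U2) (Fo : Y1 → Y2 → Yc) :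
    GLTS (X1 × X2 × Y1) Uc Yc where
  init := {s | s.1 ∈ S1.init ∧ s.2.1 ∈ S2.init}
  tr := {q | ∃ y2 : Y2,
    (q.1.2.1, Fi2 q.1.2.2 q.2.1, y2, q.2.2.2.2.1) ∈ S2.tr ∧
    (q.1.1, Fi1 q.1.2.2 y2, q.2.2.2.2.2, q.2.2.2.1) ∈ S1.tr ∧
    q.2.2.1 = Fo q.2.2.2.2.2 y2}

/-- A GLTS is deterministic: for each state and input there is at most one
transition (output and successor). -/
def GLTS.Deterministic {X U Y : Type*} (S : GLTS X U Y) : Prop :=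
  ∀ x u y y' x' x'', (x, u, y, x') ∈ S.tr → (x, u, y', x'') ∈ S.tr → y = y' ∧ x' = x''

/-- Closed/open feedback composition preserves simulation in the plant: if `R_ab`
is a simulation relation from `S_a` to `S_b` and `Π` is a deterministic controller
composable with both via the same interconnection maps, then
`S_a ∥_F Π ≼_S S_b ∥_F Π`, witnessed by the relation requiring `R_ab`-related plant
components and equal controller and stored-output components. -/
theorem compose_preserves_sim {Xa Xb U1 Y1 Xp U2 Y2 Uc Yc : Type*}
    (Sa : GLTS Xa U1 Y1) (Sb : GLTS Xb U1 Y1) (Pi : GLTS Xp U2 Y2)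
    (hdet : Pi.Deterministic)
    (Fi1 : Y1 → Y2 → U1) (Fi2 : Y1 → Uc → U2) (Fo : Y1 → Y2 → Yc)
    (Rab : Set (Xa × Xb)) (hsim : IsSimR Sa Sb Eq Eq Rab) :
    IsSimR (Sa.compose Pi Fi1 Fi2 Fo) (Sb.compose Pi Fi1 Fi2 Fo) Eq Eq
      {p | (p.1.1, p.2.1) ∈ Rab ∧ p.1.2.1 = p.2.2.1 ∧ p.1.2.2 = p.2.2.2} := by
  obtain ⟨hinit, hstep⟩ := hsim
  constructor
  · rintro ⟨xa, xp, y1⟩ ⟨ha, hp⟩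
    obtain ⟨xb, hb, hR⟩ := hinit xa ha
    exact ⟨(xb, xp, y1), ⟨hb, hp⟩, hR, rfl, rfl⟩
  · rintro ⟨xa, xp, y1⟩ ⟨xb, xp', y1'⟩ ⟨hR, hp, hy⟩ u y ⟨xa', xp2, z⟩
      ⟨y2, hPi, hSa, hout⟩
    obtain ⟨ub, yb, xb', hub, htrb, hR', hyb⟩ := hstep xa xb hR _ _ xa' hSa
    cases hub; cases hyb
    dsimp only at hp hy hR hPi hSa hout htrb ⊢
    subst hp; subst hy
    exact ⟨u, y, (xb', xp2, z), rfl, ⟨y2, hPi, htrb, hout⟩, ⟨hR', rfl, rfl⟩, rfl⟩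
end

section
/- Bezier-interpolation deviation bound: for t in the interpolation interval [0, T], the function g(t) = c·t_p³·(1 − 2 t_p/T) with c = (v_{k+1} − v_k)/T² and t_p ∈ [0, T/2] satisfies |g(t)| ≤ (3/32)|v_{k+1} − v_k| T; consequently if |v_{k+1} − v_k| ≤ Δv_max, the deviation of the smooth interpolation from the linear interpolation is at most (3/32) Δv_max T. -/
/-- Bezier-interpolation deviation bound: for `t_p ∈ [0, T/2]`, the deviation
`g(t) = ((v_{k+1} − v_k)/T²) · t_p³ · (1 − 2 t_p / T)` satisfies
`|g| ≤ (3/32) |v_{k+1} − v_k| T`; consequently, if `|v_{k+1} − v_k| ≤ Δv_max`, the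
deviation of the smooth interpolation from the linear interpolation is at most
`(3/32) Δv_max T`. -/
theorem bezier_deviation_bound (T v0 v1 Δvmax : ℝ) (hT : 0 < T)
    (tp : ℝ) (htp0 : 0 ≤ tp) (htp1 : tp ≤ T / 2) :
    |((v1 - v0) / T ^ 2) * tp ^ 3 * (1 - 2 * tp / T)| ≤ 3 / 32 * |v1 - v0| * T ∧
    (|v1 - v0| ≤ Δvmax →
      |((v1 - v0) / T ^ 2) * tp ^ 3 * (1 - 2 * tp / T)| ≤ 3 / 32 * Δvmax * T) := by
  have hT2 : 0 ≤ T - 2 * tp := by linarith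
  have hT3 : (0:ℝ) < T ^ 3 := by positivity
  have key : tp ^ 3 * (T - 2 * tp) ≤ 3 / 32 * T ^ 4 := by
    nlinarith [sq_nonneg (tp * (tp - 3 * T / 8)), sq_nonneg (tp - 3 * T / 8),
      mul_nonneg (mul_nonneg htp0 htp0) hT2, mul_nonneg htp0 hT2, sq_nonneg tp,
      mul_nonneg htp0 (mul_nonneg htp0 htp0)]
  have heq : ((v1 - v0) / T ^ 2) * tp ^ 3 * (1 - 2 * tp / T)
      = (v1 - v0) * (tp ^ 3 * (T - 2 * tp)) / T ^ 3 := by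
    field_simp
  have habs : |((v1 - v0) / T ^ 2) * tp ^ 3 * (1 - 2 * tp / T)|
      = |v1 - v0| * (tp ^ 3 * (T - 2 * tp)) / T ^ 3 := by
    rw [heq, abs_div, abs_mul, abs_of_nonneg (mul_nonneg (by positivity) hT2),
      abs_of_pos hT3]
  have h1 : |((v1 - v0) / T ^ 2) * tp ^ 3 * (1 - 2 * tp / T)| ≤ 3 / 32 * |v1 - v0| * T := by
    rw [habs]
    rw [div_le_iff₀ hT3]
    have habs0 : 0 ≤ |v1 - v0| := abs_nonneg _
    nlinarith [mul_le_mul_of_nonneg_left key habs0]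
  refine ⟨h1, fun hd => h1.trans ?_⟩
  have : 3 / 32 * |v1 - v0| * T ≤ 3 / 32 * Δvmax * T := by nlinarith
  linarith
end
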